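/- Let m > 2 and let 𝒜 = ℚ[X₁,…,X_m]/(Xᵢ² − Xⱼ² : 1 ≤ i,j ≤ m), with X̄ᵢ the class of Xᵢ. Let φ be a ℚ-algebra automorphism of 𝒜 such that φ(X̄ᵢ) lies in the ℚ-linear span of X̄₁,…,X̄_m for every i. Then there exist a non-zero rational number d, a permutation σ of {1,…,m}, and signs εᵢ ∈ {1,−1} such that φ(X̄ᵢ) = d·εᵢ·X̄_{σ(i)} for all i. -/

import Mathlib

/-!
Evaluating at the points of `{±1}^σ`, where all `Xᵢ²` agree, turns `φ(X̄ᵢ)² = φ(X̄ⱼ)²` into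
identities between the squares of the linear forms `∑ₖ aᵢₖ sₖ`, where `φ(X̄ᵢ) = ∑ₖ aᵢₖ X̄ₖ`;
comparing four sign vectors isolates the cross terms, so `aᵢₖ aᵢₗ = aⱼₖ aⱼₗ` for `k ≠ l`.
If some row had two non-zero entries, in columns `k` and `l`, then every row would be non-zero in
column `k`, and every `φ(X̄ⱼ)` would lie in the plane spanned by `X̄ₖ` and one fixed vector: too
small for `m > 2` independent vectors. Hence `φ(X̄ᵢ) = cᵢ X̄_{τ i}` with `τ` injective, and
evaluating at `(1, …, 1)` gives `cᵢ² = cⱼ²`.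
-/

open MvPolynomial

section Signs

variable {K σ : Type*} [Field K] [DecidableEq σ]

def flipSigns (T : Finset σ) (i : σ) : K := if i ∈ T then -1 else 1

lemma flipSigns_sq_eq_sq (T : Finset σ) (i j : σ) :
    flipSigns (K := K) T i ^ 2 = flipSigns T j ^ 2 := by
  unfold flipSigns; split_ifs <;> norm_num

lemma sum_mul_flipSigns [Fintype σ] (a : σ → K) (T : Finset σ) :
    ∑ i, a i * flipSigns T i = ∑ i, a i - 2 * ∑ i ∈ T, a i := by
  have h : ∀ i, a i * flipSigns T i = a i - 2 * if i ∈ T then a i else 0 := by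
    intro i; unfold flipSigns; split_ifs <;> ring
  simp only [h, Finset.sum_sub_distrib, ← Finset.mul_sum, Finset.sum_ite_mem, Finset.univ_inter]

lemma mul_eq_mul_of_sq_sum_mul_flipSigns_eq [Fintype σ] [CharZero K] {a b : σ → K}
    (h : ∀ T : Finset σ, (∑ i, a i * flipSigns T i) ^ 2 = (∑ i, b i * flipSigns T i) ^ 2)
    {k l : σ} (hkl : k ≠ l) : a k * a l = b k * b l := by
  have e₀ := h ∅
  have eₖ := h {k}
  have eₗ := h {l}
  have eₖₗ := h {k, l}
  simp only [sum_mul_flipSigns, Finset.sum_empty, Finset.sum_singleton,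
    Finset.sum_pair hkl] at e₀ eₖ eₗ eₖₗ
  linear_combination (e₀ - eₖ - eₗ + eₖₗ) / 8

end Signs

section Rows

variable {K V ι σ : Type*} [Field K] [AddCommGroup V] [Module K V] [Fintype ι] [Fintype σ]
  [DecidableEq σ] {x : σ → V} {y : ι → V} {a : ι → σ → K}

lemma LinearIndependent.eq_zero_or_eq_zero_of_mul_eq_mul (hy : LinearIndependent K y)
    (hι : 2 < Fintype.card ι) (hya : ∀ j, y j = ∑ k, a j k • x k)
    (hprod : ∀ i j k l, k ≠ l → a i k * a i l = a j k * a j l) (i : ι) {k l : σ} (hkl : k ≠ l) :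
    a i k = 0 ∨ a i l = 0 := by
  classical
  by_contra! ⟨hik, hil⟩
  have hk : ∀ j, a j k ≠ 0 := fun j hjk =>
    mul_ne_zero hik hil (by simpa [hjk] using hprod i j k l hkl)
  set P := ∑ n ∈ Finset.univ.erase k, (a i k * a i n) • x n
  have hyP : ∀ j, y j = a j k • x k + (a j k)⁻¹ • P := by
    intro j
    rw [hya, ← Finset.add_sum_erase _ _ (Finset.mem_univ k), Finset.smul_sum]
    congr 1
    refine Finset.sum_congr rfl fun n hn => ?_
    rw [smul_smul, hprod i j k n (Finset.ne_of_mem_erase hn).symm, inv_mul_cancel_left₀ (hk j)]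
  have hspan : Set.range y ⊆ (Submodule.span K (({x k, P} : Finset V) : Set V) : Set V) := by
    rintro _ ⟨j, rfl⟩
    rw [hyP j]
    exact Submodule.add_mem _ (Submodule.smul_mem _ _ (Submodule.subset_span (by simp)))
      (Submodule.smul_mem _ _ (Submodule.subset_span (by simp)))
  have := linearIndependent_le_span' y hy _ hspan
  simp only [Cardinal.mk_fintype, Finset.coe_sort_coe, Fintype.card_coe, Nat.cast_le] at this
  have := Finset.card_le_two (a := x k) (b := P)
  omega

lemma LinearIndependent.exists_injective_eq_smul_of_mul_eq_mul (hy : LinearIndependent K y)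
    (hι : 2 < Fintype.card ι) (hya : ∀ j, y j = ∑ k, a j k • x k)
    (hprod : ∀ i j k l, k ≠ l → a i k * a i l = a j k * a j l) :
    ∃ τ : ι → σ, Function.Injective τ ∧ ∀ j, a j (τ j) ≠ 0 ∧ y j = a j (τ j) • x (τ j) := by
  have hrow : ∀ j, ∃ k, a j k ≠ 0 := by
    intro j
    by_contra! h
    exact hy.ne_zero j (by simp [hya, h])
  choose τ hτ using hrow
  have hyτ : ∀ j, y j = a j (τ j) • x (τ j) := by
    intro j
    rw [hya, Finset.sum_eq_single (τ j) (fun k _ hk => ?_) (by simp)]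
    rw [(hy.eq_zero_or_eq_zero_of_mul_eq_mul hι hya hprod j (Ne.symm hk)).resolve_left (hτ j),
      zero_smul]
  refine ⟨τ, fun i j hij => ?_, fun j => ⟨hτ j, hyτ j⟩⟩
  have hxτ : x ∘ τ = (fun j => Units.mk0 (a j (τ j))⁻¹ (inv_ne_zero (hτ j))) • y := by
    ext j
    simp [hyτ j, smul_smul, inv_mul_cancel₀ (hτ j)]
  exact (hy.units_smul _).injective (by rw [← hxτ]; exact congrArg x hij)

end Rows

section SquaresQuotient

noncomputable abbrev squaresIdeal (σ R : Type*) [CommRing R] : Ideal (MvPolynomial σ R) :=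
  Ideal.span {f | ∃ i j : σ, f = X i ^ 2 - X j ^ 2}

variable {σ R : Type*} [CommRing R]

lemma mk_X_sq_eq (i j : σ) :
    Ideal.Quotient.mk (squaresIdeal σ R) (X i) ^ 2 =
      Ideal.Quotient.mk (squaresIdeal σ R) (X j) ^ 2 := by
  rw [← map_pow, ← map_pow, Ideal.Quotient.eq]
  exact Ideal.subset_span ⟨i, j, rfl⟩

noncomputable def squaresQuotientEval (s : σ → R) (hs : ∀ i j, s i ^ 2 = s j ^ 2) :
    MvPolynomial σ R ⧸ squaresIdeal σ R →ₐ[R] R :=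
  Ideal.Quotient.liftₐ _ (aeval s) fun f hf => by
    have hle : squaresIdeal σ R ≤ RingHom.ker (aeval s : MvPolynomial σ R →ₐ[R] R) := by
      rw [squaresIdeal, Ideal.span_le]
      rintro _ ⟨i, j, rfl⟩
      simp [hs i j]
    exact hle hf

@[simp]
lemma squaresQuotientEval_mk_X (s : σ → R) (hs : ∀ i j, s i ^ 2 = s j ^ 2) (i : σ) :
    squaresQuotientEval s hs (Ideal.Quotient.mk _ (X i)) = s i :=
  aeval_X s i

lemma squaresQuotientEval_sum_smul [Fintype σ] (s : σ → R) (hs : ∀ i j, s i ^ 2 = s j ^ 2)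
    (c : σ → R) :
    squaresQuotientEval s hs (∑ i, c i • Ideal.Quotient.mk _ (X i)) = ∑ i, c i * s i := by
  simp

end SquaresQuotient

section Automorphisms

variable {K σ ι : Type*} [Field K] [CharZero K] [Fintype σ] [DecidableEq σ]

lemma linearIndependent_mk_X :
    LinearIndependent K fun i => Ideal.Quotient.mk (squaresIdeal σ K) (X i) := by
  rw [Fintype.linearIndependent_iff]
  intro c hc k
  have h₀ := congrArg (squaresQuotientEval _ (flipSigns_sq_eq_sq ∅)) hc
  have hₖ := congrArg (squaresQuotientEval _ (flipSigns_sq_eq_sq {k})) hc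
  simp only [squaresQuotientEval_sum_smul, sum_mul_flipSigns, map_zero, Finset.sum_empty,
    Finset.sum_singleton] at h₀ hₖ
  linear_combination (h₀ - hₖ) / 2

theorem exists_eq_smul_mk_X_of_sq_eq [Fintype ι] {y : ι → MvPolynomial σ K ⧸ squaresIdeal σ K}
    (hy : LinearIndependent K y) (hι : 2 < Fintype.card ι) (hsq : ∀ i j, y i ^ 2 = y j ^ 2)
    (hspan : ∀ i, y i ∈ Submodule.span K (Set.range fun k => Ideal.Quotient.mk _ (X k))) :
    ∃ (d : K) (τ : ι → σ) (ε : ι → K), d ≠ 0 ∧ Function.Injective τ ∧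
      (∀ i, ε i = 1 ∨ ε i = -1) ∧ ∀ i, y i = (d * ε i) • Ideal.Quotient.mk _ (X (τ i)) := by
  choose a ha using fun i => (Submodule.mem_span_range_iff_exists_fun K).mp (hspan i)
  have hprod : ∀ i j k l, k ≠ l → a i k * a i l = a j k * a j l := by
    intro i j k l hkl
    refine mul_eq_mul_of_sq_sum_mul_flipSigns_eq (fun T => ?_) hkl
    simpa only [← ha, map_pow, squaresQuotientEval_sum_smul] using
      congrArg (squaresQuotientEval _ (flipSigns_sq_eq_sq T)) (hsq i j)
  obtain ⟨τ, hτ, hyτ⟩ :=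
    hy.exists_injective_eq_smul_of_mul_eq_mul hι (fun j => (ha j).symm) hprod
  have hc : ∀ i j, a i (τ i) ^ 2 = a j (τ j) ^ 2 := by
    intro i j
    simpa [(hyτ i).2, (hyτ j).2, flipSigns] using
      congrArg (squaresQuotientEval _ (flipSigns_sq_eq_sq (K := K) ∅)) (hsq i j)
  obtain ⟨i₀⟩ : Nonempty ι := Fintype.card_pos_iff.mp (by omega)
  have hd := (hyτ i₀).1
  refine ⟨a i₀ (τ i₀), τ, fun i => a i (τ i) / a i₀ (τ i₀), hd, hτ, fun i => ?_, fun i => ?_⟩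
  · rcases sq_eq_sq_iff_eq_or_eq_neg.mp (hc i i₀) with h | h <;> simp [h, hd]
  · rw [mul_div_cancel₀ _ hd]
    exact (hyτ i).2

end Automorphisms

theorem stmt10 (m : ℕ) (hm : 2 < m)
    (I : Ideal (MvPolynomial (Fin m) ℚ))
    (hI : I = Ideal.span {f | ∃ i j : Fin m, f = MvPolynomial.X i ^ 2 - MvPolynomial.X j ^ 2})
    (φ : (MvPolynomial (Fin m) ℚ ⧸ I) ≃ₐ[ℚ] (MvPolynomial (Fin m) ℚ ⧸ I))
    (hφ : ∀ i : Fin m, φ (Ideal.Quotient.mk I (MvPolynomial.X i)) ∈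
      Submodule.span ℚ (Set.range fun j : Fin m => Ideal.Quotient.mk I (MvPolynomial.X j))) :
    ∃ (d : ℚ) (σ : Equiv.Perm (Fin m)) (ε : Fin m → ℚ), d ≠ 0 ∧
      (∀ i, ε i = 1 ∨ ε i = -1) ∧
      ∀ i, φ (Ideal.Quotient.mk I (MvPolynomial.X i)) =
        (d * ε i) • Ideal.Quotient.mk I (MvPolynomial.X (σ i)) := by
  subst hI
  obtain ⟨d, τ, ε, hd, hτ, hε, hφε⟩ := exists_eq_smul_mk_X_of_sq_eq
    (linearIndependent_mk_X.map' φ.toLinearMap φ.toLinearEquiv.ker)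
    (by rwa [Fintype.card_fin])
    (fun i j => by
      simp only [Function.comp_apply, AlgEquiv.toLinearMap_apply, ← map_pow, mk_X_sq_eq i j])
    hφ
  exact ⟨d, Equiv.ofBijective τ hτ.bijective_of_finite, ε, hd, hε, hφε⟩
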